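/- Let d ≥ p ≥ 2, k > p, s ≥ k·d + 1, and let a⃗ = (a_1,…,a_p) be a sequence of positive integers with a_1+⋯+a_p = k. Let H ⊆ binom([n],k) be a hypergraph that contains no (a⃗,d)-Δ-system as a subfamily, and let H* be an s-homogeneous subgraph of H with intersection pattern J. Suppose r(J) = k−1 and J contains exactly k−1 sets of size k−1. Then every E ∈ H* contains a (k−1)-element subset that is not contained in any edge of H other than E; in particular, ω_H(E) ≥ 1 for every E ∈ H*. -/

import Mathlib

open Finset

/-- A Δ-system (sunflower) with center `C`: a family of at least two sets such that
the intersection of any two distinct members equals `C`. -/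
def IsDeltaSystem (D : Finset (Finset ℕ)) (C : Finset ℕ) : Prop :=
  2 ≤ D.card ∧ ∀ A ∈ D, ∀ B ∈ D, A ≠ B → A ∩ B = C

/-- `A : Fin p → Finset ℕ` is an `a⃗`-partition of the set `E`. -/
def IsAPartition (p : ℕ) (a : Fin p → ℕ) (A : Fin p → Finset ℕ) (E : Finset ℕ) : Prop :=
  (∀ i, (A i).card = a i) ∧ (∀ i j, i ≠ j → Disjoint (A i) (A j)) ∧
    Finset.univ.sup A = E

/-- A semi-`(a⃗,b⃗)`-Δ-system with host `E0` and petals `E i j` (`i ∈ [p]`, `j ∈ [b i]`):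
for some `a⃗`-partition `E0 = A 1 ∪ ⋯ ∪ A p`, for each `i` the family
`{E0, E i 1, …, E i (b i)}` is a Δ-system with center `E0 \ A i`. -/
def IsSemiSystem (p : ℕ) (a b : Fin p → ℕ) (E0 : Finset ℕ)
    (E : (i : Fin p) → Fin (b i) → Finset ℕ) : Prop :=
  ∃ A : Fin p → Finset ℕ, IsAPartition p a A E0 ∧
    ∀ i : Fin p,
      (∀ j, E i j ≠ E0) ∧ Function.Injective (E i) ∧
      (∀ j, E0 ∩ E i j = E0 \ A i) ∧
      (∀ j j', j ≠ j' → E i j ∩ E i j' = E0 \ A i)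

/-- An `(a⃗,b⃗)`-Δ-system: a semi-`(a⃗,b⃗)`-Δ-system in which the sets `E i j \ E0`
are pairwise disjoint. -/
def IsABSystem (p : ℕ) (a b : Fin p → ℕ) (E0 : Finset ℕ)
    (E : (i : Fin p) → Fin (b i) → Finset ℕ) : Prop :=
  IsSemiSystem p a b E0 E ∧
    ∀ x y : (i : Fin p) × Fin (b i), x ≠ y →
      Disjoint (E x.1 x.2 \ E0) (E y.1 y.2 \ E0)

/-- The family described by the predicate `Fam` contains an `(a⃗,d)`-Δ-system, i.e. an
`(a⃗,b⃗)`-Δ-system with `b` a sequence of positive integers summing to `d`, all of whose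
members belong to `Fam`. -/
def FamContainsADSystem (p : ℕ) (a : Fin p → ℕ) (d : ℕ) (Fam : Finset ℕ → Prop) : Prop :=
  ∃ b : Fin p → ℕ, (∀ i, 0 < b i) ∧ (∑ i, b i) = d ∧
    ∃ E0, Fam E0 ∧ ∃ E : (i : Fin p) → Fin (b i) → Finset ℕ,
      (∀ i j, Fam (E i j)) ∧ IsABSystem p a b E0 E

/-- The finite family `H` contains an `(a⃗,d)`-Δ-system as a subfamily. -/
def ContainsADSystem (p : ℕ) (a : Fin p → ℕ) (d : ℕ) (H : Finset (Finset ℕ)) : Prop :=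
  FamContainsADSystem p a d (· ∈ H)

/-- A family is `d`-wise-intersecting if every `d` of its members have a common element. -/
def WiseIntersecting (d : ℕ) (F : Finset (Finset ℕ)) : Prop :=
  ∀ f : Fin d → Finset ℕ, (∀ i, f i ∈ F) → ∃ v, ∀ i, v ∈ f i

/-- Non-trivial `d`-wise-intersecting: `d`-wise-intersecting, but no element lies in
all members. -/
def NonTrivialWiseIntersecting (d : ℕ) (F : Finset (Finset ℕ)) : Prop :=
  WiseIntersecting d F ∧ ¬ ∃ v, ∀ A ∈ F, v ∈ A

/-- A family is intersecting if every two members have a nonempty intersection. -/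
def IntersectingFam (F : Finset (Finset ℕ)) : Prop :=
  ∀ A ∈ F, ∀ B ∈ F, (A ∩ B).Nonempty

/-- Non-trivial intersecting: intersecting, but no element lies in all members. -/
def NonTrivialIntersectingFam (F : Finset (Finset ℕ)) : Prop :=
  IntersectingFam F ∧ ¬ ∃ v, ∀ A ∈ F, v ∈ A

/-- The intersection structure `I(E,H) = {E ∩ E' : E' ∈ H \ {E}}`. -/
def interStruct (H : Finset (Finset ℕ)) (E : Finset ℕ) : Finset (Finset ℕ) :=
  (H.erase E).image (fun E' => E ∩ E')

/-- The projection `Π(S) = {i : S ∩ V i ≠ ∅}` with respect to the parts `V`. -/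
def proj {k : ℕ} (V : Fin k → Finset ℕ) (S : Finset ℕ) : Finset (Fin k) :=
  Finset.univ.filter (fun i => (S ∩ V i).Nonempty)

/-- `H ⊆ binom([n],k)` is `s`-homogeneous with intersection pattern
`J ⊆ 2^[k] ∖ {[k]}`: `H` is `k`-partite (with parts partitioning `[n] = Icc 1 n`),
`Π(I(E,H)) = J` for all `E ∈ H`, `J` is closed under intersection, and every set of
`I(E,H)` is the center of a Δ-system of size `s` formed by edges of `H` containing `E`. -/
def IsHomogeneousWith (n k s : ℕ) (H : Finset (Finset ℕ)) (J : Finset (Finset (Fin k))) :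
    Prop :=
  ∃ V : Fin k → Finset ℕ,
    (∀ i j, i ≠ j → Disjoint (V i) (V j)) ∧
    Finset.univ.sup V = Finset.Icc 1 n ∧
    (∀ E ∈ H, ∀ i, (E ∩ V i).card = 1) ∧
    (Finset.univ : Finset (Fin k)) ∉ J ∧
    (∀ E ∈ H, (interStruct H E).image (proj V) = J) ∧
    (∀ A ∈ J, ∀ B ∈ J, A ∩ B ∈ J) ∧
    (∀ E ∈ H, ∀ C ∈ interStruct H E,
      ∃ D : Finset (Finset ℕ), D ⊆ H ∧ E ∈ D ∧ D.card = s ∧ IsDeltaSystem D C)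

/-- The rank `r(J) = min{|A| : A ⊆ [k], A ∉ J, no B ∈ J contains A}`. -/
noncomputable def patternRank {k : ℕ} (J : Finset (Finset (Fin k))) : ℕ :=
  sInf {m : ℕ | ∃ A : Finset (Fin k), A ∉ J ∧ (∀ B ∈ J, ¬ A ⊆ B) ∧ A.card = m}

/-- The `i`-th shadow of a `k`-uniform family: all `(k-i)`-subsets of its edges. -/
def iShadow (k i : ℕ) (H : Finset (Finset ℕ)) : Finset (Finset ℕ) :=
  H.biUnion (fun E => Finset.powersetCard (k - i) E)

/-- `deg_H(E')`: the number of edges of `H` containing `E'`. -/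
def degSet (H : Finset (Finset ℕ)) (E' : Finset ℕ) : ℕ :=
  (H.filter (fun F => E' ⊆ F)).card

/-- The weight `ω_H(E) = Σ_{E' ⊆ E, |E'| = k-1} 1 / deg_H(E')`. -/
noncomputable def weight (k : ℕ) (H : Finset (Finset ℕ)) (E : Finset ℕ) : ℝ :=
  ∑ E' ∈ Finset.powersetCard (k - 1) E, (1 : ℝ) / (degSet H E' : ℝ)

/-- `deg_H(uv)` for a 3-graph: the number of edges containing both `u` and `v`. -/
def deg2 (H : Finset (Finset ℕ)) (u v : ℕ) : ℕ :=
  (H.filter (fun A => u ∈ A ∧ v ∈ A)).card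


/-!
Closure of `J` under intersection, together with `k - 1` of the `k` sets
`[k] \ {j}` lying in `J`, puts every proper subset of `[k]` containing the remaining index `c`
into `J`. Hence, with `W` the `c`-th part, every proper subset of an edge `E ∈ H*` that contains
the vertex `v₀ ∈ E ∩ W` is the center of a Δ-system of size `s` in `H*` through `E`.

Suppose `F = E - v₀ + w` is another edge of `H`. Choose `i` with `a_i ≥ 2` and `C* ⊆ E - v₀` of
size `k - a_i`. Some petal `E₀` of the Δ-system through `E` with center `C* + v₀` misses `w`, so
`E₀ ∩ F = C*`. Partition `E₀` with `i`-th block `E₀ \ C*`: then `F` is a petal in direction `i`,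
and for every other block `A_j` the set `E₀ \ A_j` contains `v₀`, so it is the center of a
Δ-system of size `s ≥ kd + 1`. From these the remaining `d - 1` petals can be picked greedily
with pairwise disjoint parts outside `E₀`, giving an `(a⃗,d)`-Δ-system in `H`.
-/

theorem exists_forall_ne_erase_mem {α : Type*} [Fintype α] [DecidableEq α] [Nonempty α]
    {J : Finset (Finset α)}
    (hJ : (J.filter fun A => A.card = Fintype.card α - 1).card = Fintype.card α - 1) :
    ∃ i₀, ∀ j ≠ i₀, univ.erase j ∈ J := by
  set M := univ.filter fun j : α => univ.erase j ∈ J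
  have hM : M.image (univ.erase ·) = J.filter fun A => A.card = Fintype.card α - 1 := by
    ext A
    simp only [M, mem_image, mem_filter, mem_univ, true_and]
    constructor
    · rintro ⟨j, hj, rfl⟩
      exact ⟨hj, by rw [card_erase_of_mem (mem_univ j), card_univ]⟩
    · rintro ⟨hA, hcard⟩
      have : Aᶜ.card = 1 := by
        rw [card_compl, hcard]
        have := Fintype.card_pos (α := α)
        omega
      obtain ⟨j, hj⟩ := card_eq_one.mp this
      refine ⟨j, ?_, ?_⟩ <;> rw [← compl_singleton, ← hj, compl_compl]
      exact hA
  have hMcard : Mᶜ.card = 1 := by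
    have hMJ : M.card = Fintype.card α - 1 := by
      rw [← hJ, ← hM, card_image_of_injective _ fun i j h => (erase_inj _ (mem_univ i)).mp h]
    rw [card_compl, hMJ]
    have := Fintype.card_pos (α := α)
    omega
  obtain ⟨i₀, hi₀⟩ := card_eq_one.mp hMcard
  refine ⟨i₀, fun j hj => ?_⟩
  have : j ∉ Mᶜ := by simpa [hi₀] using hj
  simpa [M] using this

theorem mem_of_forall_ne_erase_mem {α : Type*} [Fintype α] [DecidableEq α]
    {J : Finset (Finset α)} (hJ : ∀ A ∈ J, ∀ B ∈ J, A ∩ B ∈ J) {i₀ : α}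
    (hJ₀ : ∀ j ≠ i₀, univ.erase j ∈ J) {S : Finset α} (hi₀ : i₀ ∈ S) (hS : S ≠ univ) :
    S ∈ J := by
  have hne : Sᶜ.Nonempty := by
    rwa [nonempty_iff_ne_empty, Ne, compl_eq_empty_iff]
  have hS : Sᶜ.inf' hne (univ.erase ·) = S := by
    ext x
    simp only [mem_inf', mem_compl, mem_erase, mem_univ, and_true]
    exact ⟨fun h => by_contra fun hx => h x hx rfl, fun hx j hj hjx => hj (hjx ▸ hx)⟩
  rw [← hS]
  exact inf'_induction hne _ hJ fun j hj => hJ₀ j fun h => mem_compl.mp hj (h ▸ hi₀)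

theorem proj_injOn {k : ℕ} {V : Fin k → Finset ℕ} {E : Finset ℕ}
    (hE : ∀ i, (E ∩ V i).card = 1) (hEV : E ⊆ univ.sup V) :
    Set.InjOn (proj V) (E.powerset : Set (Finset ℕ)) := by
  suffices h : ∀ C ⊆ E, ∀ C' ⊆ E, proj V C = proj V C' → C ⊆ C' from
    fun C hC C' hC' hCC' => (h C (mem_powerset.mp hC) C' (mem_powerset.mp hC') hCC').antisymm
      (h C' (mem_powerset.mp hC') C (mem_powerset.mp hC) hCC'.symm)
  intro C hC C' hC' hCC' x hx
  obtain ⟨i, -, hxi⟩ := mem_sup.mp (hEV (hC hx))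
  have hi : i ∈ proj V C' := by
    rw [← hCC']
    simpa [proj] using ⟨x, mem_inter.mpr ⟨hx, hxi⟩⟩
  obtain ⟨y, hy⟩ : (C' ∩ V i).Nonempty := by simpa [proj] using hi
  obtain ⟨hy, hyi⟩ := mem_inter.mp hy
  obtain ⟨z, hz⟩ := card_eq_one.mp (hE i)
  have hxz : x ∈ ({z} : Finset ℕ) := hz ▸ mem_inter.mpr ⟨hC hx, hxi⟩
  have hyz : y ∈ ({z} : Finset ℕ) := hz ▸ mem_inter.mpr ⟨hC' hy, hyi⟩
  rwa [mem_singleton.mp hxz, ← mem_singleton.mp hyz]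

theorem proj_eq_univ {k : ℕ} {V : Fin k → Finset ℕ} {E : Finset ℕ}
    (hE : ∀ i, (E ∩ V i).card = 1) : proj V E = univ :=
  eq_univ_of_forall fun i => by
    simpa [proj] using card_pos.mp (hE i ▸ Nat.one_pos)

theorem proj_ne_univ_of_ssubset {k : ℕ} {V : Fin k → Finset ℕ} {E C : Finset ℕ}
    (hE : ∀ i, (E ∩ V i).card = 1) (hEV : E ⊆ univ.sup V) (hC : C ⊂ E) :
    proj V C ≠ univ := by
  rw [← proj_eq_univ hE]
  exact fun h => hC.ne (proj_injOn hE hEV (mem_powerset.mpr hC.subset)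
    (mem_powerset_self E) h)

theorem mem_interStruct_of_proj_mem {k : ℕ} {V : Fin k → Finset ℕ} {H : Finset (Finset ℕ)}
    {E C : Finset ℕ} (hE : ∀ i, (E ∩ V i).card = 1) (hEV : E ⊆ univ.sup V) (hC : C ⊆ E)
    (hCJ : proj V C ∈ (interStruct H E).image (proj V)) : C ∈ interStruct H E := by
  obtain ⟨C', hC', hproj⟩ := mem_image.mp hCJ
  have hC'E : C' ⊆ E := by
    obtain ⟨F, -, rfl⟩ := mem_image.mp hC'
    exact inter_subset_left
  rwa [← proj_injOn hE hEV (mem_powerset.mpr hC'E) (mem_powerset.mpr hC) hproj]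

def HasDeltaSystem (H : Finset (Finset ℕ)) (s : ℕ) (E C : Finset ℕ) : Prop :=
  ∃ D ⊆ H, E ∈ D ∧ D.card = s ∧ IsDeltaSystem D C

theorem HasDeltaSystem.mono {H H' : Finset (Finset ℕ)} {s : ℕ} {E C : Finset ℕ}
    (h : HasDeltaSystem H s E C) (hH : H ⊆ H') : HasDeltaSystem H' s E C :=
  let ⟨D, hD, hED, hcard, hΔ⟩ := h
  ⟨D, hD.trans hH, hED, hcard, hΔ⟩

theorem IsHomogeneousWith.exists_part_hasDeltaSystem_of_ssubset {n k s : ℕ} {H : Finset (Finset ℕ)}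
    {J : Finset (Finset (Fin k))} (hhom : IsHomogeneousWith n k s H J)
    (hH : ∀ E ∈ H, E ⊆ Icc 1 n) (hk : 0 < k)
    (hJ : (J.filter fun A => A.card = k - 1).card = k - 1) :
    ∃ W : Finset ℕ, (∀ E ∈ H, (E ∩ W).card = 1) ∧
      ∀ E ∈ H, ∀ C ⊂ E, (C ∩ W).Nonempty → HasDeltaSystem H s E C := by
  obtain ⟨V, -, hVsup, hVE, -, hIJ, hJinter, hΔ⟩ := hhom
  have : Nonempty (Fin k) := ⟨⟨0, hk⟩⟩
  obtain ⟨i₀, hi₀⟩ := exists_forall_ne_erase_mem (J := J) (by simpa using hJ)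
  refine ⟨V i₀, fun E hE => hVE E hE i₀, fun E hE C hC hCW => hΔ E hE C ?_⟩
  have hEV : E ⊆ univ.sup V := hVsup ▸ hH E hE
  refine mem_interStruct_of_proj_mem (hVE E hE) hEV hC.subset ?_
  rw [hIJ E hE]
  refine mem_of_forall_ne_erase_mem hJinter hi₀ ?_ (proj_ne_univ_of_ssubset (hVE E hE) hEV hC)
  simpa [proj] using hCW

theorem IsDeltaSystem.exists_ne_notMem {D : Finset (Finset ℕ)} {C E : Finset ℕ} {w : ℕ}
    (hD : IsDeltaSystem D C) (hw : w ∉ C) (hE : E ∈ D) (hcard : 3 ≤ D.card) :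
    ∃ E₀ ∈ D, E₀ ≠ E ∧ w ∉ E₀ := by
  -- two distinct members containing `w` would put `w` in the center
  have hmem : ((D.erase E).filter (w ∈ ·)).card ≤ 1 :=
    card_le_one.mpr fun P hP Q hQ => by_contra fun hPQ => hw <| by
      rw [mem_filter] at hP hQ
      rw [← hD.2 P (mem_of_mem_erase hP.1) Q (mem_of_mem_erase hQ.1) hPQ]
      exact mem_inter.mpr ⟨hP.2, hQ.2⟩
  have hsplit := card_filter_add_card_filter_not (s := D.erase E) (w ∈ ·)
  rw [card_erase_of_mem hE] at hsplit
  obtain ⟨E₀, hE₀⟩ : ((D.erase E).filter (w ∉ ·)).Nonempty := by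
    rw [← card_pos]; omega
  obtain ⟨hE₀D, hwE₀⟩ := mem_filter.mp hE₀
  exact ⟨E₀, mem_of_mem_erase hE₀D, ne_of_mem_erase hE₀D, hwE₀⟩

theorem exists_pairwiseDisjoint_card_eq {ι α : Type*} [DecidableEq ι] [DecidableEq α]
    (T : Finset ι) (a : ι → ℕ) (X : Finset α) (hX : X.card = ∑ i ∈ T, a i) :
    ∃ A : ι → Finset α, (∀ i ∈ T, (A i).card = a i) ∧ (T : Set ι).PairwiseDisjoint A ∧
      T.biUnion A = X := by
  induction T using Finset.induction_on generalizing X with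
  | empty => exact ⟨fun _ => ∅, by simp, by simp, by
    rw [sum_empty, card_eq_zero] at hX; simp [hX]⟩
  | @insert i T hiT ih =>
    rw [sum_insert hiT] at hX
    obtain ⟨B, hBX, hB⟩ := exists_subset_card_eq (s := X) (n := a i) (by omega)
    obtain ⟨A, hA, hAdisj, hAX⟩ := ih (X \ B) (by rw [card_sdiff_of_subset hBX]; omega)
    have hAB : ∀ j ∈ T, Disjoint B (A j) := fun j hj =>
      disjoint_sdiff.mono_right (hAX ▸ subset_biUnion_of_mem A hj)
    refine ⟨Function.update A i B, ?_, ?_, ?_⟩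
    · intro j hj
      rcases eq_or_ne j i with rfl | hji
      · simpa using hB
      · simpa [hji] using hA j ((mem_insert.mp hj).resolve_left hji)
    · rw [coe_insert, Set.pairwiseDisjoint_insert]
      refine ⟨fun j hj l hl hjl => ?_, fun j hj hij => ?_⟩
      · have hji : j ≠ i := fun h => hiT (h ▸ hj)
        have hli : l ≠ i := fun h => hiT (h ▸ hl)
        simpa [Function.onFun, hji, hli] using hAdisj hj hl hjl
      · simpa [hij.symm] using hAB j hj
    · rw [biUnion_insert, Function.update_self,
        biUnion_congr (t₂ := A) rfl fun j hj => by simp [show j ≠ i from fun h => hiT (h ▸ hj)],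
        hAX, union_sdiff_of_subset hBX]

theorem IsAPartition.subset {p : ℕ} {a : Fin p → ℕ} {A : Fin p → Finset ℕ} {X : Finset ℕ}
    (hA : IsAPartition p a A X) (i : Fin p) : A i ⊆ X :=
  hA.2.2 ▸ le_sup (f := A) (mem_univ i)

theorem exists_isAPartition_of_block {p : ℕ} {a : Fin p → ℕ} {X Y : Finset ℕ} {i₀ : Fin p}
    (hX : X.card = ∑ i, a i) (hYX : Y ⊆ X) (hY : Y.card = a i₀) :
    ∃ A, IsAPartition p a A X ∧ A i₀ = Y := by
  obtain ⟨A, hA, hAdisj, hAX⟩ := exists_pairwiseDisjoint_card_eq (univ.erase i₀) a (X \ Y) (by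
    rw [card_sdiff_of_subset hYX, hX, ← add_sum_erase _ _ (mem_univ i₀), hY]; omega)
  have hAY : ∀ j ≠ i₀, Disjoint Y (A j) := fun j hj =>
    disjoint_sdiff.mono_right (hAX ▸ subset_biUnion_of_mem A (mem_erase.mpr ⟨hj, mem_univ j⟩))
  refine ⟨Function.update A i₀ Y, ⟨fun j => ?_, fun j l hjl => ?_, ?_⟩, by simp⟩
  · rcases eq_or_ne j i₀ with rfl | hj
    · simpa using hY
    · simpa [hj] using hA j (mem_erase.mpr ⟨hj, mem_univ j⟩)
  · rcases eq_or_ne j i₀ with rfl | hj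
    · simpa [hjl.symm] using hAY l hjl.symm
    rcases eq_or_ne l i₀ with rfl | hl
    · simpa [hj] using (hAY j hj).symm
    simpa [hj, hl] using hAdisj (by simpa using hj) (by simpa using hl) hjl
  · rw [sup_eq_biUnion, ← insert_erase (mem_univ i₀), biUnion_insert, Function.update_self,
      biUnion_congr (t₂ := A) rfl fun j hj => by simp [ne_of_mem_erase hj], hAX,
      union_sdiff_of_subset hYX]

theorem exists_subset_card_eq_forall_disjoint {β γ : Type*} {f : β → Finset γ} {G : Finset β}
    {U : Finset γ} {m : ℕ} (hG : (G : Set β).PairwiseDisjoint f) (hcard : U.card + m ≤ G.card) :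
    ∃ S ⊆ G, S.card = m ∧ ∀ P ∈ S, Disjoint (f P) U := by
  classical
  -- each point of `U` meets at most one member of `G`
  have hbad : (G.filter fun P => ¬ Disjoint (f P) U).card ≤ U.card := by
    refine card_le_card_of_forall_subsingleton (fun P u => u ∈ f P) (fun P hP => ?_)
      fun u _ P hP Q hQ => hG.elim_finset (mem_filter.mp hP.1).1 (mem_filter.mp hQ.1).1 u hP.2 hQ.2
    obtain ⟨u, hPu, hu⟩ := not_disjoint_iff.mp (mem_filter.mp hP).2
    exact ⟨u, hu, hPu⟩
  have hsplit := card_filter_add_card_filter_not (s := G) fun P => Disjoint (f P) U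
  obtain ⟨S, hS, hSm⟩ := exists_subset_card_eq (s := G.filter fun P => Disjoint (f P) U)
    (n := m) (by omega)
  exact ⟨S, hS.trans (filter_subset _ _), hSm, fun P hP => (mem_filter.mp (hS hP)).2⟩

theorem exists_disjoint_subfamilies {ι β γ : Type*} [DecidableEq ι] [DecidableEq γ]
    (f : β → Finset γ) {k : ℕ} (hk : 0 < k) (G : ι → Finset β) (b : ι → ℕ) (T : Finset ι)
    (hG : ∀ i ∈ T, (G i : Set β).PairwiseDisjoint f) (hsize : ∀ i ∈ T, ∀ P ∈ G i, (f P).card ≤ k)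
    (U : Finset γ) (hcard : ∀ i ∈ T, U.card + (∑ j ∈ T, b j) * k ≤ (G i).card) :
    ∃ S : ι → Finset β, (∀ i ∈ T, S i ⊆ G i ∧ (S i).card = b i ∧ ∀ P ∈ S i, Disjoint (f P) U) ∧
      ∀ i ∈ T, ∀ j ∈ T, i ≠ j → ∀ P ∈ S i, ∀ Q ∈ S j, Disjoint (f P) (f Q) := by
  induction T using Finset.induction_on generalizing U with
  | empty => exact ⟨fun _ => ∅, by simp, by simp⟩
  | @insert i T hiT ih =>
    simp only [sum_insert hiT, add_mul] at hcard
    have hbi : b i ≤ b i * k := Nat.le_mul_of_pos_right _ hk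
    obtain ⟨Si, hSiG, hSib, hSiU⟩ := exists_subset_card_eq_forall_disjoint
      (hG i (mem_insert_self i T)) (m := b i) (U := U)
      ((Nat.add_le_add_left (hbi.trans (Nat.le_add_right _ _)) _).trans
        (hcard i (mem_insert_self i T)))
    set U' := U ∪ Si.biUnion f
    have hU' : U'.card ≤ U.card + b i * k := by
      refine (card_union_le _ _).trans (Nat.add_le_add_left ?_ _)
      exact hSib ▸ card_biUnion_le_card_mul _ _ _ fun P hP =>
        hsize i (mem_insert_self i T) P (hSiG hP)
    obtain ⟨S, hS, hScross⟩ := ih (fun j hj => hG j (mem_insert_of_mem hj))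
      (fun j hj => hsize j (mem_insert_of_mem hj)) U'
      fun j hj => by linarith [hcard j (mem_insert_of_mem hj)]
    have hSiS : ∀ j ∈ T, ∀ P ∈ Si, ∀ Q ∈ S j, Disjoint (f P) (f Q) := fun j hj P hP Q hQ =>
      ((hS j hj).2.2 Q hQ).symm.mono_left (subset_union_right.trans' (subset_biUnion_of_mem f hP))
    have hne : ∀ j ∈ T, j ≠ i := fun j hj h => hiT (h ▸ hj)
    refine ⟨Function.update S i Si, fun j hj => ?_, fun j hj l hl hjl => ?_⟩
    · rcases mem_insert.mp hj with rfl | hjT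
      · simpa using ⟨hSiG, hSib, hSiU⟩
      · obtain ⟨hSG, hSb, hSU'⟩ := hS j hjT
        simpa [hne j hjT] using ⟨hSG, hSb, fun P hP => (hSU' P hP).mono_right subset_union_left⟩
    · rcases mem_insert.mp hj with rfl | hjT <;> rcases mem_insert.mp hl with rfl | hlT
      · exact absurd rfl hjl
      · simpa [hne l hlT] using hSiS l hlT
      · simpa [hne j hjT] using fun P hP Q hQ => (hSiS j hjT Q hQ P hP).symm
      · simpa [hne j hjT, hne l hlT] using hScross j hjT l hlT hjl

theorem disjoint_sdiff_of_inter_subset {α : Type*} [DecidableEq α] {P Q X : Finset α}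
    (h : P ∩ Q ⊆ X) : Disjoint (P \ X) (Q \ X) :=
  disjoint_left.mpr fun _ hP hQ =>
    (mem_sdiff.mp hP).2 (h (mem_inter.mpr ⟨(mem_sdiff.mp hP).1, (mem_sdiff.mp hQ).1⟩))

theorem exists_pos_sum_eq_of_apply_eq_one {p d : ℕ} (hp : 2 ≤ p) (hpd : p ≤ d) (i₀ : Fin p) :
    ∃ b : Fin p → ℕ, (∀ i, 0 < b i) ∧ ∑ i, b i = d ∧ b i₀ = 1 := by
  have : Nontrivial (Fin p) := Fin.nontrivial_iff_two_le.mpr hp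
  obtain ⟨i₁, hi₁⟩ := exists_ne i₀
  refine ⟨fun i => 1 + (Pi.single i₁ (d - p) : Fin p → ℕ) i,
    fun _ => Nat.one_pos.trans_le (Nat.le_add_right _ _), ?_, by simp [hi₁.symm]⟩
  rw [sum_add_distrib, sum_pi_single']
  simp only [sum_const, card_univ, Fintype.card_fin, smul_eq_mul, mul_one, mem_univ, if_true]
  omega

theorem containsADSystem_of_pairwise {p d : ℕ} {a b : Fin p → ℕ} {H : Finset (Finset ℕ)}
    {E₀ : Finset ℕ} {A : Fin p → Finset ℕ} (hE₀ : E₀ ∈ H) (hA : IsAPartition p a A E₀)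
    (hb : ∀ i, 0 < b i) (hbd : ∑ i, b i = d) (S : Fin p → Finset (Finset ℕ))
    (hS : ∀ i, (S i).card = b i) (hSH : ∀ i, S i ⊆ H) (hE₀S : ∀ i, E₀ ∉ S i)
    (hsun : ∀ i, (insert E₀ (S i : Set (Finset ℕ))).Pairwise fun P Q => P ∩ Q = E₀ \ A i)
    (hcross : ∀ i j, i ≠ j → ∀ P ∈ S i, ∀ Q ∈ S j, Disjoint (P \ E₀) (Q \ E₀)) :
    ContainsADSystem p a d H := by
  set E : (i : Fin p) → Fin (b i) → Finset ℕ := fun i j => ((S i).equivFinOfCardEq (hS i)).symm j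
  have hE : ∀ i j, E i j ∈ S i := fun i j => coe_mem _
  have hEinj : ∀ i, Function.Injective (E i) := fun i =>
    Subtype.val_injective.comp ((S i).equivFinOfCardEq (hS i)).symm.injective
  have hEne : ∀ i j, E i j ≠ E₀ := fun i j h => hE₀S i (h ▸ hE i j)
  refine ⟨b, hb, hbd, E₀, hE₀, E, fun i j => hSH i (hE i j),
    ⟨A, hA, fun i => ⟨hEne i, hEinj i, fun j => ?_, fun j j' hjj' => ?_⟩⟩, ?_⟩
  · exact hsun i (Set.mem_insert _ _) (Set.mem_insert_of_mem _ (hE i j)) (hEne i j).symm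
  · exact hsun i (Set.mem_insert_of_mem _ (hE i j)) (Set.mem_insert_of_mem _ (hE i j'))
      ((hEinj i).ne hjj')
  · rintro ⟨i, j⟩ ⟨l, m⟩ hne
    rcases eq_or_ne i l with rfl | hil
    · have hjm : j ≠ m := fun h => hne (h ▸ rfl)
      refine disjoint_sdiff_of_inter_subset ?_
      rw [hsun i (Set.mem_insert_of_mem _ (hE i j)) (Set.mem_insert_of_mem _ (hE i m))
        ((hEinj i).ne hjm)]
      exact sdiff_subset
    · exact hcross i l hil _ (hE i j) _ (hE l m)

theorem exists_petal_families {ι : Type*} [DecidableEq ι] {k s : ℕ} {H : Finset (Finset ℕ)}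
    {E₀ U : Finset ℕ} {A : ι → Finset ℕ} (T : Finset ι) (b : ι → ℕ) (hk : 0 < k)
    (hH : ∀ P ∈ H, P.card ≤ k) (hs : U.card + (∑ j ∈ T, b j) * k + 1 ≤ s)
    (hΔ : ∀ i ∈ T, HasDeltaSystem H s E₀ (E₀ \ A i)) :
    ∃ S : ι → Finset (Finset ℕ),
      (∀ i ∈ T, (S i).card = b i ∧ S i ⊆ H ∧ E₀ ∉ S i ∧
        (insert E₀ (S i : Set (Finset ℕ))).Pairwise (fun P Q => P ∩ Q = E₀ \ A i) ∧
        ∀ P ∈ S i, Disjoint (P \ E₀) U) ∧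
      ∀ i ∈ T, ∀ j ∈ T, i ≠ j → ∀ P ∈ S i, ∀ Q ∈ S j, Disjoint (P \ E₀) (Q \ E₀) := by
  obtain ⟨D, hD⟩ : ∃ D : ι → Finset (Finset ℕ), ∀ i ∈ T,
      D i ⊆ H ∧ E₀ ∈ D i ∧ (D i).card = s ∧ IsDeltaSystem (D i) (E₀ \ A i) :=
    ⟨fun i => if h : i ∈ T then (hΔ i h).choose else ∅,
      fun i hi => by simpa [hi] using (hΔ i hi).choose_spec⟩
  have hDsun : ∀ i ∈ T, (D i : Set (Finset ℕ)).Pairwise fun P Q => P ∩ Q = E₀ \ A i :=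
    fun i hi P hP Q hQ => (hD i hi).2.2.2.2 P hP Q hQ
  have hG : ∀ i ∈ T, (((D i).erase E₀ : Finset (Finset ℕ)) : Set (Finset ℕ)).PairwiseDisjoint
      (· \ E₀) := fun i hi =>
    ((hDsun i hi).mono (coe_subset.mpr (erase_subset _ _))).imp fun P Q h =>
      disjoint_sdiff_of_inter_subset (h ▸ sdiff_subset)
  have hGsize : ∀ i ∈ T, ∀ P ∈ (D i).erase E₀, (P \ E₀).card ≤ k := fun i hi P hP =>
    (card_le_card sdiff_subset).trans (hH P ((hD i hi).1 (mem_of_mem_erase hP)))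
  have hGcard : ∀ i ∈ T, U.card + (∑ j ∈ T, b j) * k ≤ ((D i).erase E₀).card := fun i hi => by
    rw [card_erase_of_mem (hD i hi).2.1, (hD i hi).2.2.1]
    omega
  obtain ⟨S, hS, hScross⟩ :=
    exists_disjoint_subfamilies (· \ E₀) hk (fun i => (D i).erase E₀) b T hG hGsize U hGcard
  refine ⟨S, fun i hi => ⟨(hS i hi).2.1, ?_, ?_, ?_, (hS i hi).2.2⟩, hScross⟩
  · exact (hS i hi).1.trans ((erase_subset _ _).trans (hD i hi).1)
  · exact fun h => (mem_erase.mp ((hS i hi).1 h)).1 rfl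
  · refine (hDsun i hi).mono (Set.insert_subset (hD i hi).2.1 ?_)
    exact coe_subset.mpr ((hS i hi).1.trans (erase_subset _ _))

theorem containsADSystem_of_hasDeltaSystem {p d k s : ℕ} {a : Fin p → ℕ}
    {H : Finset (Finset ℕ)} {E₀ F : Finset ℕ} {A : Fin p → Finset ℕ} {i₀ : Fin p}
    (hp : 2 ≤ p) (hpd : p ≤ d) (hk : 0 < k) (hs : k * d + 1 ≤ s) (hH : ∀ P ∈ H, P.card ≤ k)
    (hE₀ : E₀ ∈ H) (hA : IsAPartition p a A E₀) (hF : F ∈ H) (hFE₀ : F ≠ E₀)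
    (hE₀F : E₀ ∩ F = E₀ \ A i₀) (hΔ : ∀ i ≠ i₀, HasDeltaSystem H s E₀ (E₀ \ A i)) :
    ContainsADSystem p a d H := by
  obtain ⟨b, hb, hbd, hbi₀⟩ := exists_pos_sum_eq_of_apply_eq_one hp hpd i₀
  set T := univ.erase i₀
  have hT : ∀ {i}, i ∈ T ↔ i ≠ i₀ := by simp [T]
  have hbT : (∑ j ∈ T, b j) * k + k = k * d := by
    rw [← add_one_mul, ← hbi₀, sum_erase_add _ _ (mem_univ i₀), hbd, mul_comm]
  have hFk := (card_le_card (sdiff_subset (s := F) (t := E₀))).trans (hH F hF)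
  -- the petal in direction `i₀` is `F` itself; the others must avoid it
  obtain ⟨S, hS, hScross⟩ := exists_petal_families (U := F \ E₀) T b hk hH (by omega)
    fun i hi => hΔ i (hT.mp hi)
  refine containsADSystem_of_pairwise hE₀ hA hb hbd (Function.update S i₀ {F}) (fun i => ?_)
    (fun i => ?_) (fun i => ?_) (fun i => ?_) fun i j hij P hP Q hQ => ?_
  all_goals rcases eq_or_ne i i₀ with rfl | hi
  · simp [hbi₀]
  · simpa [hi] using (hS i (hT.mpr hi)).1
  · simpa using hF
  · simpa [hi] using (hS i (hT.mpr hi)).2.1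
  · simpa using hFE₀.symm
  · simpa [hi] using (hS i (hT.mpr hi)).2.2.1
  · simpa [Set.pairwise_pair] using fun _ => ⟨hE₀F, inter_comm F E₀ ▸ hE₀F⟩
  · simpa [hi] using (hS i (hT.mpr hi)).2.2.2.1
  · simp only [Function.update_self, Function.update_of_ne hij.symm, mem_singleton] at hP hQ
    exact hP ▸ ((hS j (hT.mpr hij.symm)).2.2.2.2 Q hQ).symm
  rcases eq_or_ne j i₀ with rfl | hj
  · simp only [Function.update_self, Function.update_of_ne hi, mem_singleton] at hP hQ
    exact hQ ▸ (hS i (hT.mpr hi)).2.2.2.2 P hP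
  · simp only [Function.update_of_ne hi, Function.update_of_ne hj] at hP hQ
    exact hScross i (hT.mpr hi) j (hT.mpr hj) hij P hP Q hQ

theorem exists_eq_insert_erase {E F : Finset ℕ} {v : ℕ} (hv : v ∈ E) (hEF : E.erase v ⊆ F)
    (hcard : F.card = E.card) (hFE : F ≠ E) : ∃ w ∉ E, F = insert w (E.erase v) := by
  obtain ⟨w, hw⟩ := card_eq_one.mp (show (F \ E.erase v).card = 1 by
    rw [card_sdiff_of_subset hEF, card_erase_of_mem hv, hcard]
    have := card_pos.mpr ⟨v, hv⟩
    omega)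
  have hF : F = insert w (E.erase v) := by
    rw [← union_sdiff_of_subset hEF, hw, union_comm, singleton_union]
  have hwE' : w ∉ E.erase v := (mem_sdiff.mp (hw ▸ mem_singleton_self w : w ∈ F \ E.erase v)).2
  refine ⟨w, fun hwE => hFE ?_, hF⟩
  rw [hF, (by simpa [hwE] using hwE' : w = v), insert_erase hv]

theorem containsADSystem_of_erase_subset {p d k s : ℕ} {a : Fin p → ℕ}
    {H Hs : Finset (Finset ℕ)} {W E F : Finset ℕ} {v₀ : ℕ}
    (hp : 2 ≤ p) (hpd : p ≤ d) (hpk : p < k) (hs : k * d + 1 ≤ s) (ha : ∀ i, 0 < a i)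
    (hsum : ∑ i, a i = k) (hH : ∀ P ∈ H, P.card = k) (hsub : Hs ⊆ H)
    (hW : ∀ E ∈ Hs, ∀ C ⊂ E, (C ∩ W).Nonempty → HasDeltaSystem Hs s E C)
    (hE : E ∈ Hs) (hv₀E : v₀ ∈ E) (hv₀W : v₀ ∈ W) (hF : F ∈ H) (hFE : F ≠ E)
    (hEF : E.erase v₀ ⊆ F) : ContainsADSystem p a d H := by
  have hEk := hH E (hsub hE)
  obtain ⟨w, hwE, rfl⟩ := exists_eq_insert_erase hv₀E hEF (hEk ▸ hH _ hF) hFE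
  obtain ⟨i₀, -, hi₀⟩ := exists_lt_of_sum_lt (s := univ) (f := fun _ => 1) (g := a)
    (by simpa [hsum] using hpk)
  have hai₀ : a i₀ ≤ k := hsum ▸ single_le_sum (fun i _ => (ha i).le) (mem_univ i₀)
  obtain ⟨Cs, hCs, hCscard⟩ := exists_subset_card_eq (s := E.erase v₀) (n := k - a i₀)
    (by rw [card_erase_of_mem hv₀E]; omega)
  have hv₀Cs : v₀ ∉ Cs := fun h => (mem_erase.mp (hCs h)).1 rfl
  have hCE : insert v₀ Cs ⊂ E := by
    refine (insert_subset hv₀E (hCs.trans (erase_subset _ _))).ssubset_of_ne fun h => ?_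
    have := card_insert_of_notMem hv₀Cs
    rw [h] at this
    omega
  obtain ⟨D, hDHs, hED, hDs, hDΔ⟩ :=
    hW E hE _ hCE ⟨v₀, mem_inter.mpr ⟨mem_insert_self _ _, hv₀W⟩⟩
  have hkd : 2 * 2 ≤ k * d := Nat.mul_le_mul (by omega) (by omega)
  obtain ⟨E₀, hE₀D, hE₀E, hwE₀⟩ :=
    hDΔ.exists_ne_notMem (fun h => hwE (hCE.subset h)) hED (by omega)
  have hE₀Hs := hDHs hE₀D
  have hE₀C : E₀ ∩ E = insert v₀ Cs := hDΔ.2 E₀ hE₀D E hED hE₀E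
  have hv₀E₀ : v₀ ∈ E₀ := (mem_inter.mp (hE₀C ▸ mem_insert_self v₀ Cs)).1
  have hCsE₀ : Cs ⊆ E₀ := fun x hx => (mem_inter.mp (hE₀C ▸ mem_insert_of_mem hx)).1
  have hE₀F : E₀ ∩ insert w (E.erase v₀) = Cs := by
    rw [inter_insert_of_notMem hwE₀, inter_erase, hE₀C, erase_insert hv₀Cs]
  obtain ⟨A, hA, hAi₀⟩ := exists_isAPartition_of_block (i₀ := i₀) ((hH E₀ (hsub hE₀Hs)).trans
    hsum.symm) (sdiff_subset (s := E₀) (t := Cs))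
    (by rw [card_sdiff_of_subset hCsE₀, hH E₀ (hsub hE₀Hs), hCscard]; omega)
  refine containsADSystem_of_hasDeltaSystem hp hpd (by omega) hs (fun P hP => (hH P hP).le)
    (hsub hE₀Hs) hA hF (fun h => ?_) (by rw [hAi₀, Finset.sdiff_sdiff_eq_self hCsE₀, hE₀F])
    fun i hi => (hW E₀ hE₀Hs _ (sdiff_ssubset (hA.subset i) ?_) ⟨v₀, ?_⟩).mono hsub
  · have : v₀ ∈ insert w (E.erase v₀) := h ▸ hv₀E₀
    simp [show v₀ ≠ w from fun h => hwE (h ▸ hv₀E)] at this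
  · exact card_pos.mp ((hA.1 i).symm ▸ ha i)
  · have hv₀A : v₀ ∈ A i₀ := hAi₀ ▸ mem_sdiff.mpr ⟨hv₀E₀, hv₀Cs⟩
    exact mem_inter.mpr ⟨mem_sdiff.mpr ⟨hv₀E₀, disjoint_right.mp (hA.2.1 i i₀ hi) hv₀A⟩, hv₀W⟩

theorem one_le_weight {k : ℕ} {H : Finset (Finset ℕ)} {E E' : Finset ℕ} (hE : E ∈ H)
    (hE'E : E' ⊆ E) (hE' : E'.card = k - 1) (huniq : ∀ F ∈ H, F ≠ E → ¬ E' ⊆ F) :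
    1 ≤ weight k H E := by
  have hdeg : degSet H E' = 1 := card_eq_one.mpr ⟨E, eq_singleton_iff_unique_mem.mpr
    ⟨mem_filter.mpr ⟨hE, hE'E⟩, fun F hF => by_contra fun h =>
      huniq F (mem_filter.mp hF).1 h (mem_filter.mp hF).2⟩⟩
  calc (1 : ℝ) = 1 / (degSet H E' : ℝ) := by simp [hdeg]
    _ ≤ weight k H E := single_le_sum (f := fun E' => (1 : ℝ) / (degSet H E' : ℝ))
        (fun _ _ => by positivity) (mem_powersetCard.mpr ⟨hE'E, hE'⟩)

theorem stmt18_general (n p k d s : ℕ) (hp : 2 ≤ p) (hpd : p ≤ d) (hpk : p < k)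
    (hs : k * d + 1 ≤ s)
    (a : Fin p → ℕ) (ha : ∀ i, 0 < a i) (hsum : ∑ i, a i = k)
    (H Hstar : Finset (Finset ℕ)) (J : Finset (Finset (Fin k)))
    (hH : H ⊆ Finset.powersetCard k (Finset.Icc 1 n))
    (hfree : ¬ ContainsADSystem p a d H)
    (hsub : Hstar ⊆ H)
    (hhom : IsHomogeneousWith n k s Hstar J)
    (hJ : (J.filter (fun A => A.card = k - 1)).card = k - 1) :
    ∀ E ∈ Hstar,
      (∃ E' ⊆ E, E'.card = k - 1 ∧ ∀ F ∈ H, F ≠ E → ¬ E' ⊆ F) ∧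
      (1 : ℝ) ≤ weight k H E := by
  intro E hE
  have hHk : ∀ P ∈ H, P.card = k := fun P hP => (mem_powersetCard.mp (hH hP)).2
  obtain ⟨W, hWcard, hW⟩ :=
    hhom.exists_part_hasDeltaSystem_of_ssubset
      (fun P hP => (mem_powersetCard.mp (hH (hsub hP))).1) (by omega) hJ
  obtain ⟨v₀, hv₀⟩ := card_eq_one.mp (hWcard E hE)
  obtain ⟨hv₀E, hv₀W⟩ := mem_inter.mp (hv₀ ▸ mem_singleton_self v₀)
  have huniq : ∀ F ∈ H, F ≠ E → ¬ E.erase v₀ ⊆ F := fun F hF hFE hEF =>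
    hfree (containsADSystem_of_erase_subset hp hpd hpk hs ha hsum hHk hsub hW hE hv₀E hv₀W hF
      hFE hEF)
  have hcard : (E.erase v₀).card = k - 1 := by rw [card_erase_of_mem hv₀E, hHk E (hsub hE)]
  exact ⟨⟨E.erase v₀, erase_subset _ _, hcard, huniq⟩,
    one_le_weight (hsub hE) (erase_subset _ _) hcard huniq⟩

/-- Let `d ≥ p ≥ 2`, `k > p`, `s ≥ k·d + 1`, `a⃗` positive with
`Σ a_i = k`. Let `H ⊆ binom([n],k)` contain no `(a⃗,d)`-Δ-system, and let `H*` be an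
`s`-homogeneous subgraph of `H` with pattern `J`, where `r(J) = k-1` and `J` has exactly
`k-1` sets of size `k-1`. Then every `E ∈ H*` has a `(k-1)`-subset contained in no other
edge of `H`; in particular `ω_H(E) ≥ 1` for every `E ∈ H*`. -/
theorem stmt18 (n p k d s : ℕ) (hp : 2 ≤ p) (hpd : p ≤ d) (hpk : p < k)
    (hs : k * d + 1 ≤ s)
    (a : Fin p → ℕ) (ha : ∀ i, 0 < a i) (hsum : ∑ i, a i = k)
    (H Hstar : Finset (Finset ℕ)) (J : Finset (Finset (Fin k)))
    (hH : H ⊆ Finset.powersetCard k (Finset.Icc 1 n))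
    (hfree : ¬ ContainsADSystem p a d H)
    (hsub : Hstar ⊆ H)
    (hhom : IsHomogeneousWith n k s Hstar J)
    (hrank : patternRank J = k - 1)
    (hJ : (J.filter (fun A => A.card = k - 1)).card = k - 1) :
    ∀ E ∈ Hstar,
      (∃ E' ⊆ E, E'.card = k - 1 ∧ ∀ F ∈ H, F ≠ E → ¬ E' ⊆ F) ∧
      (1 : ℝ) ≤ weight k H E :=
  stmt18_general n p k d s hp hpd hpk hs a ha hsum H Hstar J hH hfree hsub hhom hJ
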